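/- Let X = ℓ_p with 2 < p < ∞. Fix an integer M ≥ 0, and suppose that B is an operator on E_M = span(e_0, …, e_M) with ‖B‖ = 1 such that B is absolutely exposing and evenly distributed. Then for every ε > 0 there exists δ > 0 such that every T ∈ 𝔅₁(X) satisfying ‖P_M T P_M − B‖ < δ satisfies ‖P_M T (I − P_M)‖ < ε. -/

import Mathlib

open Topology Filter
open scoped ENNReal

noncomputable section

/-- The sequence space `ℓ_p` over `ℂ`. -/
abbrev ellp (p : ℝ≥0∞) : Type := lp (fun _ : ℕ => ℂ) p

variable (p : ℝ≥0∞) [Fact (1 ≤ p)]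

/-- The `j`-th coordinate functional `e_j*` on `ℓ_p`. -/
def coordL (j : ℕ) : ellp p →L[ℂ] ℂ :=
  LinearMap.mkContinuous
    { toFun := fun x => x j
      map_add' := fun x y => by simp
      map_smul' := fun c x => by simp }
    1
    (fun x => by
      have hp0 : p ≠ 0 := by
        have h := (Fact.out : (1 : ℝ≥0∞) ≤ p)
        intro h0; rw [h0] at h; exact (not_le.mpr zero_lt_one) h
      exact (show ‖(x : ℕ → ℂ) j‖ ≤ 1 * ‖x‖ by simpa using lp.norm_apply_le_norm hp0 x j))

/-- The canonical projection `P_M` of `ℓ_p` onto `E_M = span (e_0, …, e_M)`: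
`P_M x = ∑_{j ≤ M} x_j e_j`. -/
def projL (M : ℕ) : ellp p →L[ℂ] ellp p :=
  ∑ j ∈ Finset.range (M + 1), (coordL p j).smulRight (lp.single p j 1)

end
variable {p : ℝ≥0∞} [Fact (1 ≤ p)]
lemma coordL_apply (j : ℕ) (x : ellp p) : coordL p j x = x j := rfl
lemma projL_apply (M : ℕ) (x : ellp p) (j : ℕ) :
    (projL p M x : ℕ → ℂ) j = if j ≤ M then x j else 0 := by
  rw [projL, ContinuousLinearMap.sum_apply, lp.coeFn_sum, Finset.sum_apply]
  simp only [ContinuousLinearMap.smulRight_apply, coordL_apply, lp.coeFn_smul, Pi.smul_apply]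
  have step : ∀ k, k ∈ Finset.range (M + 1) →
      x k • (lp.single p k (1:ℂ) : ∀ _ : ℕ, ℂ) j = if j = k then x j else 0 := by
    intro k _
    rcases eq_or_ne j k with rfl | h
    · simp [lp.single_apply_self]
    · simp [lp.single_apply_ne p k _ h, h]
  rw [Finset.sum_congr rfl step]
  by_cases hj : j ≤ M
  · rw [Finset.sum_ite_eq (Finset.range (M+1)) j (fun _ => x j),
      if_pos (Finset.mem_range.2 (Nat.lt_succ_of_le hj)), if_pos hj]
  · rw [Finset.sum_eq_zero, if_neg hj]
    intro k hk
    rw [if_neg]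
    intro h
    exact hj (h ▸ Nat.le_of_lt_succ (Finset.mem_range.1 hk))

lemma coord_eq_zero_of_proj_eq_self {M : ℕ} {x : ellp p} (h : projL p M x = x)
    {j : ℕ} (hj : ¬ j ≤ M) : x j = 0 := by
  have := congrArg (fun y : ellp p => (y : ℕ → ℂ) j) h
  simpa [projL_apply, hj] using this.symm

lemma coord_eq_zero_of_proj_eq_zero {M : ℕ} {x : ellp p} (h : projL p M x = 0)
    {j : ℕ} (hj : j ≤ M) : x j = 0 := by
  have := congrArg (fun y : ellp p => (y : ℕ → ℂ) j) h
  simpa [projL_apply, hj] using this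

lemma norm_rpow_eq_finsum {M : ℕ} (hq : 0 < p.toReal) {y : ellp p}
    (h : ∀ j, ¬ j ≤ M → y j = 0) :
    ‖y‖ ^ p.toReal = ∑ j ∈ Finset.range (M + 1), ‖y j‖ ^ p.toReal := by
  rw [lp.norm_rpow_eq_tsum hq]
  refine tsum_eq_sum ?_
  intro j hj
  have hjM : ¬ j ≤ M := fun h' => hj (Finset.mem_range.2 (Nat.lt_succ_of_le h'))
  rw [h j hjM, norm_zero, Real.zero_rpow hq.ne']

lemma norm_projL_le (hq : 0 < p.toReal) (M : ℕ) (x : ellp p) : ‖projL p M x‖ ≤ ‖x‖ := by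
  refine lp.norm_le_of_tsum_le hq (norm_nonneg x) ?_
  rw [lp.norm_rpow_eq_tsum hq x]
  refine Summable.tsum_le_tsum ?_ ((lp.memℓp _).summable hq) ((lp.memℓp _).summable hq)
  intro j
  rw [projL_apply]
  by_cases hj : j ≤ M
  · simp [hj]
  · simp [hj, Real.zero_rpow hq.ne', Real.rpow_nonneg]

lemma norm_sub_projL_le (hq : 0 < p.toReal) (M : ℕ) (x : ellp p) :
    ‖x - projL p M x‖ ≤ ‖x‖ := by
  refine lp.norm_le_of_tsum_le hq (norm_nonneg x) ?_
  rw [lp.norm_rpow_eq_tsum hq x]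
  refine Summable.tsum_le_tsum ?_ ((lp.memℓp _).summable hq) ((lp.memℓp _).summable hq)
  intro j
  rw [lp.coeFn_sub, Pi.sub_apply, projL_apply]
  by_cases hj : j ≤ M
  · simp [hj, Real.zero_rpow hq.ne', Real.rpow_nonneg]
  · simp [hj]

lemma norm_rpow_add_of_disjoint {M : ℕ} (hq : 0 < p.toReal) {x w : ellp p}
    (hx : projL p M x = x) (hw : projL p M w = 0) :
    ‖x + w‖ ^ p.toReal = ‖x‖ ^ p.toReal + ‖w‖ ^ p.toReal := by
  rw [lp.norm_rpow_eq_tsum hq, lp.norm_rpow_eq_tsum hq, lp.norm_rpow_eq_tsum hq]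
  rw [← Summable.tsum_add ((lp.memℓp _).summable hq) ((lp.memℓp _).summable hq)]
  refine tsum_congr fun j => ?_
  rw [lp.coeFn_add, Pi.add_apply]
  by_cases hj : j ≤ M
  · rw [coord_eq_zero_of_proj_eq_zero hw hj, add_zero, norm_zero,
      Real.zero_rpow hq.ne', add_zero]
  · rw [coord_eq_zero_of_proj_eq_self hx hj, zero_add, norm_zero,
      Real.zero_rpow hq.ne', zero_add]

omit [Fact (1 ≤ p)] in
lemma sum_rpow_le_sum_sq_rpow {s : Finset ℕ} (f : ℕ → ℝ) (hf : ∀ j ∈ s, 0 ≤ f j)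
    {q : ℝ} (hq : 2 ≤ q) :
    (∑ j ∈ s, f j ^ q) ≤ (∑ j ∈ s, f j ^ 2) ^ (q / 2) := by
  set S : ℝ := ∑ j ∈ s, f j ^ 2 with hS
  have hS0 : 0 ≤ S := Finset.sum_nonneg fun j _ => sq_nonneg _
  have hqq : (0:ℝ) < q / 2 := by linarith
  have key : ∀ j ∈ s, f j ^ q ≤ f j ^ 2 * S ^ (q / 2 - 1) := by
    intro j hj
    have h2 : f j ^ 2 ≤ S := Finset.single_le_sum (fun i _ => sq_nonneg (f i)) hj
    have hfj := hf j hj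
    rcases eq_or_lt_of_le hfj with h0 | h0
    · rw [← h0, Real.zero_rpow (by linarith : q ≠ 0)]
      positivity
    · have e1 : f j ^ q = (f j ^ 2 : ℝ) ^ (q / 2) := by
        rw [← Real.rpow_natCast (f j) 2, ← Real.rpow_mul hfj]
        rw [show ((2:ℕ):ℝ) * (q / 2) = q by push_cast; ring]
      rw [e1]
      have e2 : (f j ^ 2 : ℝ) ^ (q / 2) = (f j ^ 2) ^ (q/2 - 1) * (f j ^ 2) ^ (1:ℝ) := by
        rw [← Real.rpow_add (by positivity)]
        norm_num
      rw [e2, Real.rpow_one]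
      have h3 : (f j ^ 2 : ℝ) ^ (q/2 - 1) ≤ S ^ (q/2-1) :=
        Real.rpow_le_rpow (by positivity) h2 (by linarith)
      nlinarith [sq_nonneg (f j)]
  calc (∑ j ∈ s, f j ^ q) ≤ ∑ j ∈ s, f j ^ 2 * S ^ (q / 2 - 1) :=
        Finset.sum_le_sum key
    _ = S * S ^ (q/2 - 1) := by rw [← Finset.sum_mul]
    _ ≤ S ^ (q/2) := by
        rcases eq_or_lt_of_le hS0 with h0 | h0
        · rw [← h0, Real.zero_rpow (by linarith : q/2 ≠ 0)]; simp
        · have e3 : S ^ (q/2) = S ^ (1:ℝ) * S ^ (q/2 - 1) := by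
            rw [← Real.rpow_add h0]; norm_num
          rw [e3, Real.rpow_one]

lemma norm_sq_le_sum_sq {M : ℕ} (hq2 : 2 ≤ p.toReal) (hq : 0 < p.toReal) {z : ellp p}
    (h : ∀ j, ¬ j ≤ M → z j = 0) :
    ‖z‖ ^ 2 ≤ ∑ j ∈ Finset.range (M + 1), ‖z j‖ ^ 2 := by
  set q := p.toReal
  have h1 : ‖z‖ ^ q ≤ (∑ j ∈ Finset.range (M + 1), ‖z j‖ ^ 2) ^ (q / 2) := by
    rw [norm_rpow_eq_finsum hq h]
    exact sum_rpow_le_sum_sq_rpow _ (fun j _ => norm_nonneg _) hq2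
  have h2 : ‖z‖ ^ q = ((‖z‖ ^ 2 : ℝ)) ^ (q / 2) := by
    rw [← Real.rpow_natCast ‖z‖ 2, ← Real.rpow_mul (norm_nonneg z)]
    rw [show ((2:ℕ):ℝ) * (q / 2) = q by push_cast; ring]
  rw [h2] at h1
  have := (Real.rpow_le_rpow_iff (by positivity) (Finset.sum_nonneg fun j _ => sq_nonneg _)
    (by linarith : (0:ℝ) < q/2)).1 h1
  exact this

lemma key_scalar {q : ℝ} (hq : 2 ≤ q) (a b : ℂ) :
    2 * ((‖a‖ ^ 2 + ‖b‖ ^ 2) ^ (q / 2)) ≤ ‖a + b‖ ^ q + ‖a - b‖ ^ q := by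
  set r : ℝ := q / 2 with hr
  have hr1 : 1 ≤ r := by rw [hr]; linarith
  have h1 : ∀ x : ℂ, ‖x‖ ^ q = (‖x‖ ^ 2 : ℝ) ^ r := by
    intro x
    rw [← Real.rpow_natCast ‖x‖ 2, ← Real.rpow_mul (norm_nonneg x)]
    rw [show ((2:ℕ):ℝ) * r = q by rw [hr]; push_cast; ring]
  have hpar : ‖a + b‖ ^ 2 + ‖a - b‖ ^ 2 = 2 * (‖a‖ ^ 2 + ‖b‖ ^ 2) := by
    have := parallelogram_law_with_norm ℂ a b
    nlinarith [this]
  have hconv := (convexOn_rpow hr1).2 (Set.mem_Ici.2 (by positivity : (0:ℝ) ≤ ‖a + b‖ ^ 2))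
    (Set.mem_Ici.2 (by positivity : (0:ℝ) ≤ ‖a - b‖ ^ 2))
    (by norm_num : (0:ℝ) ≤ 1/2) (by norm_num : (0:ℝ) ≤ 1/2) (by norm_num)
  simp only [smul_eq_mul] at hconv
  have h2 : (1/2 : ℝ) * (‖a + b‖^2) + (1/2) * (‖a - b‖^2) = ‖a‖^2 + ‖b‖^2 := by linarith
  rw [h2] at hconv
  rw [h1 (a+b), h1 (a-b)]
  linarith [hconv]

lemma bernoulli_step {X Y c r : ℝ} (hc : 0 < c) (hcX : c ≤ X) (hY : 0 ≤ Y) (hr : 1 ≤ r) :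
    X ^ r + r * c ^ (r - 1) * Y ≤ (X + Y) ^ r := by
  have hX : 0 < X := lt_of_lt_of_le hc hcX
  have hYX : (0:ℝ) ≤ Y / X := by positivity
  have h1 : X ^ r * (1 + r * (Y / X)) ≤ X ^ r * ((1 + Y / X) ^ r) := by
    apply mul_le_mul_of_nonneg_left _ (Real.rpow_nonneg hX.le r)
    have := one_add_mul_self_le_rpow_one_add (by linarith : (-1:ℝ) ≤ Y / X) hr
    linarith [this]
  have h2 : X ^ r * ((1 + Y / X) ^ r) = (X + Y) ^ r := by
    rw [← Real.mul_rpow hX.le (by positivity)]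
    congr 1
    field_simp
  have h3 : X ^ r * (1 + r * (Y / X)) = X ^ r + r * X ^ (r - 1) * Y := by
    rw [Real.rpow_sub hX]
    field_simp
    simp only [Real.rpow_one, pow_one]; ring
  have h4 : c ^ (r - 1) ≤ X ^ (r - 1) :=
    Real.rpow_le_rpow hc.le hcX (by linarith)
  have h5 : r * c ^ (r - 1) * Y ≤ r * X ^ (r - 1) * Y := by
    apply mul_le_mul_of_nonneg_right _ hY
    apply mul_le_mul_of_nonneg_left h4 (by linarith)
  linarith [h1, h2 ▸ h1]

/-- Per-coordinate key inequality. -/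
lemma coord_key {q : ℝ} (hq : 2 ≤ q) {m : ℝ} (hm : 0 < m) {a b : ℂ} (ha : m ≤ ‖a‖) :
    2 * ‖a‖ ^ q + q * ((m ^ 2 : ℝ)) ^ (q / 2 - 1) * ‖b‖ ^ 2
      ≤ ‖a + b‖ ^ q + ‖a - b‖ ^ q := by
  have h1 := key_scalar hq a b
  have hm2 : (0:ℝ) < m ^ 2 := by positivity
  have hm2' : (m ^ 2 : ℝ) ≤ ‖a‖ ^ 2 := by nlinarith
  have h2 := bernoulli_step hm2 hm2' (sq_nonneg ‖b‖) (by linarith : (1:ℝ) ≤ q / 2)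
  have h3 : ((‖a‖ ^ 2 : ℝ)) ^ (q/2) = ‖a‖ ^ q := by
    rw [← Real.rpow_natCast ‖a‖ 2, ← Real.rpow_mul (norm_nonneg a)]
    rw [show ((2:ℕ):ℝ) * (q / 2) = q by push_cast; ring]
  nlinarith [h1, h2, h3]

lemma projL_proj (M : ℕ) (x : ellp p) : projL p M (projL p M x) = projL p M x := by
  apply lp.ext
  funext j
  rw [projL_apply, projL_apply]
  by_cases hj : j ≤ M
  · simp [hj, projL_apply]
  · simp [hj]

set_option maxHeartbeats 1000000 in
theorem exposing_operator_forces_small_corner'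
    (hp : 2 < p) (hp' : p ≠ ∞)
    (M : ℕ) (B : ellp p →L[ℂ] ellp p)
    (hBnorm : ‖B‖ = 1)
    (x₀ : ellp p) (hx₀E : projL p M x₀ = x₀) (hx₀norm : ‖x₀‖ = 1) (hx₀n : ‖B x₀‖ = ‖B‖)
    (heven : ∀ x : ellp p, projL p M x = x → ‖x‖ = 1 → ‖B x‖ = ‖B‖ →
      ∀ j ≤ M, coordL p j x ≠ 0 ∧ coordL p j (B x) ≠ 0) :
    ∀ ε : ℝ, 0 < ε → ∃ δ : ℝ, 0 < δ ∧
      ∀ T : ellp p →L[ℂ] ellp p, ‖T‖ ≤ 1 →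
        ‖(projL p M).comp (T.comp (projL p M)) - B‖ < δ →
        ‖(projL p M).comp (T.comp (1 - projL p M))‖ < ε := by
  intro ε hε
  have hp0 : p ≠ 0 := by
    have h := (Fact.out : (1 : ℝ≥0∞) ≤ p)
    intro h0; rw [h0] at h; exact (not_le.mpr zero_lt_one) h
  set q : ℝ := p.toReal with hqdef
  have hq2 : 2 < q := by
    have := ENNReal.toReal_strict_mono hp' hp
    simpa using this
  have hq0 : 0 < q := by linarith
  have hq1 : 2 ≤ q := hq2.le
  -- the minimum coordinate of B x₀
  have hne : (Finset.range (M + 1)).Nonempty := ⟨0, Finset.mem_range.2 (Nat.succ_pos M)⟩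
  set m₀ : ℝ := (Finset.range (M + 1)).inf' hne (fun j => ‖(B x₀ : ℕ → ℂ) j‖) with hm₀def
  have hm₀ : 0 < m₀ := by
    rw [hm₀def, Finset.lt_inf'_iff]
    intro j hj
    have hjM : j ≤ M := Nat.le_of_lt_succ (Finset.mem_range.1 hj)
    have := (heven x₀ hx₀E hx₀norm hx₀n j hjM).2
    simpa [norm_pos_iff, coordL_apply] using this
  set m : ℝ := m₀ / 2 with hmdef
  have hm : 0 < m := by positivity
  set K : ℝ := q * ((m ^ 2 : ℝ)) ^ (q / 2 - 1) with hKdef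
  have hK : 0 < K := by
    apply mul_pos hq0
    exact Real.rpow_pos_of_pos (by positivity) _
  set c₀ : ℝ := min 1 (K * ε ^ 2 / 16) with hc₀def
  have hc₀ : 0 < c₀ := lt_min one_pos (by positivity)
  set t : ℝ := c₀ ^ (1 / (q - 2)) with htdef
  have ht : 0 < t := Real.rpow_pos_of_pos hc₀ _
  have ht2 : t ^ (q - 2) = c₀ := by
    rw [htdef, ← Real.rpow_mul hc₀.le, one_div,
      inv_mul_cancel₀ (by linarith : q - 2 ≠ 0), Real.rpow_one]
  set δ : ℝ := min (m₀ / 2) (min (1 / 2) (K * t ^ 2 * ε ^ 2 / (16 * q))) with hδdef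
  have hδ : 0 < δ := by
    apply lt_min (by positivity)
    exact lt_min (by norm_num) (by positivity)
  clear_value m₀ m K c₀ t δ
  refine ⟨δ, hδ, ?_⟩
  intro T hT hTB
  set P : ellp p →L[ℂ] ellp p := projL p M with hPdef
  -- the key estimate for unit vectors supported beyond M
  have main : ∀ w : ellp p, P w = 0 → ‖w‖ ≤ 1 → ‖P (T w)‖ ≤ ε / 2 := by
    intro w hw hw1
    set u : ellp p := P (T x₀) with hudef
    set z : ellp p := P (T w) with hzdef
    have hu_supp : ∀ j, ¬ j ≤ M → (u : ℕ → ℂ) j = 0 := fun j hj =>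
      coord_eq_zero_of_proj_eq_self (projL_proj M (T x₀)) hj
    have hz_supp : ∀ j, ¬ j ≤ M → (z : ℕ → ℂ) j = 0 := fun j hj =>
      coord_eq_zero_of_proj_eq_self (projL_proj M (T w)) hj
    -- u is δ-close to B x₀
    have hu_close : ‖u - B x₀‖ < δ := by
      have e : u - B x₀ = ((projL p M).comp (T.comp (projL p M)) - B) x₀ := by
        simp [hudef, ContinuousLinearMap.sub_apply, ContinuousLinearMap.comp_apply, hx₀E, hPdef,
          (show projL p M x₀ = x₀ from hx₀E)]
      rw [e]
      calc ‖((projL p M).comp (T.comp (projL p M)) - B) x₀‖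
          ≤ ‖(projL p M).comp (T.comp (projL p M)) - B‖ * ‖x₀‖ :=
            ContinuousLinearMap.le_opNorm _ _
        _ = ‖(projL p M).comp (T.comp (projL p M)) - B‖ := by rw [hx₀norm, mul_one]
        _ < δ := hTB
    have hδm : δ ≤ m₀ / 2 := hδdef ▸ min_le_left _ _
    have hδhalf : δ ≤ 1 / 2 := hδdef ▸ le_trans (min_le_right _ _) (min_le_left _ _)
    have hδlast : δ ≤ K * t ^ 2 * ε ^ 2 / (16 * q) :=
      hδdef ▸ le_trans (min_le_right _ _) (min_le_right _ _)
    -- coordinatewise lower bound on u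
    have hu_coord : ∀ j ≤ M, m ≤ ‖(u : ℕ → ℂ) j‖ := by
      intro j hj
      have h1 : ‖(u : ℕ → ℂ) j - (B x₀ : ℕ → ℂ) j‖ ≤ ‖u - B x₀‖ := by
        have := lp.norm_apply_le_norm hp0 (u - B x₀) j
        simpa [lp.coeFn_sub, Pi.sub_apply] using this
      have h2 : m₀ ≤ ‖(B x₀ : ℕ → ℂ) j‖ := by
        rw [hm₀def]
        exact Finset.inf'_le _ (Finset.mem_range.2 (Nat.lt_succ_of_le hj))
      have h3 := norm_sub_norm_le ((u : ℕ → ℂ) j) ((B x₀ : ℕ → ℂ) j)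
      have : ‖(B x₀ : ℕ → ℂ) j‖ - ‖(u : ℕ → ℂ) j‖ ≤ δ := by
        calc ‖(B x₀ : ℕ → ℂ) j‖ - ‖(u : ℕ → ℂ) j‖ ≤ ‖(u : ℕ → ℂ) j - (B x₀ : ℕ → ℂ) j‖ := by
              have := norm_sub_norm_le ((B x₀ : ℕ → ℂ) j) ((u : ℕ → ℂ) j)
              rw [norm_sub_rev] at this
              linarith
          _ ≤ ‖u - B x₀‖ := h1
          _ ≤ δ := hu_close.le
      rw [hmdef]; linarith
    -- norm lower bound on u
    have hu_norm : 1 - δ ≤ ‖u‖ := by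
      have h1 : ‖B x₀‖ - ‖u‖ ≤ ‖u - B x₀‖ := by
        have := norm_sub_norm_le (B x₀) u
        rw [norm_sub_rev] at this
        linarith
      rw [hx₀n, hBnorm] at h1
      linarith [hu_close.le]
    -- the two basic upper bounds
    have hTc : ∀ y : ellp p, ‖T y‖ ≤ ‖y‖ := fun y =>
      le_trans (T.le_opNorm y) (mul_le_of_le_one_left (norm_nonneg y) hT)
    have hup : ∀ σ : ℝ, σ = 1 ∨ σ = -1 →
        ‖u + ((σ * t : ℝ) : ℂ) • z‖ ^ q ≤ 1 + t ^ q := by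
      intro σ hσ
      have habs' : ‖((σ * t : ℝ) : ℂ)‖ = t := by
        rcases hσ with rfl | rfl <;> simp [Complex.norm_real, abs_of_pos ht]
      have e : u + ((σ * t : ℝ) : ℂ) • z = P (T (x₀ + ((σ * t : ℝ) : ℂ) • w)) := by
        rw [map_add, map_add, map_smul, map_smul]
      have hsupp : P (((σ * t : ℝ) : ℂ) • w) = 0 := by
        rw [map_smul, hw, smul_zero]
      have h1 : ‖u + ((σ * t : ℝ) : ℂ) • z‖ ≤ ‖x₀ + ((σ * t : ℝ) : ℂ) • w‖ := by
        rw [e]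
        exact le_trans (norm_projL_le hq0 M _) (hTc _)
      have h2 : ‖x₀ + ((σ * t : ℝ) : ℂ) • w‖ ^ q = 1 + ‖((σ * t : ℝ) : ℂ) • w‖ ^ q := by
        rw [norm_rpow_add_of_disjoint hq0 hx₀E hsupp, hx₀norm, Real.one_rpow]
      have h3 : ‖((σ * t : ℝ) : ℂ) • w‖ ^ q ≤ t ^ q := by
        rw [norm_smul, habs']
        exact Real.rpow_le_rpow (by positivity) (by nlinarith [norm_nonneg w]) hq0.le
      calc ‖u + ((σ * t : ℝ) : ℂ) • z‖ ^ q
          ≤ ‖x₀ + ((σ * t : ℝ) : ℂ) • w‖ ^ q :=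
            Real.rpow_le_rpow (norm_nonneg _) h1 hq0.le
        _ ≤ 1 + t ^ q := by rw [h2]; linarith [h3]
    have hupp : ‖u + ((t : ℝ) : ℂ) • z‖ ^ q ≤ 1 + t ^ q := by
      have := hup 1 (Or.inl rfl)
      simpa using this
    have hupm : ‖u - ((t : ℝ) : ℂ) • z‖ ^ q ≤ 1 + t ^ q := by
      have := hup (-1) (Or.inr rfl)
      rw [show ((((-1 : ℝ) * t : ℝ)) : ℂ) • z = -(((t : ℝ) : ℂ) • z) by
          push_cast; rw [neg_one_mul, neg_smul]] at this
      rw [← sub_eq_add_neg] at this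
      exact this
    -- pass to coordinates
    set s : Finset ℕ := Finset.range (M + 1) with hsdef
    have hsupp_add : ∀ j, ¬ j ≤ M → ((u + ((t : ℝ) : ℂ) • z : ellp p) : ℕ → ℂ) j = 0 := by
      intro j hj
      rw [lp.coeFn_add, Pi.add_apply, lp.coeFn_smul, Pi.smul_apply, hu_supp j hj,
        hz_supp j hj, smul_zero, add_zero]
    have hsupp_sub : ∀ j, ¬ j ≤ M → ((u - ((t : ℝ) : ℂ) • z : ellp p) : ℕ → ℂ) j = 0 := by
      intro j hj
      rw [lp.coeFn_sub, Pi.sub_apply, lp.coeFn_smul, Pi.smul_apply, hu_supp j hj,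
        hz_supp j hj, smul_zero, sub_zero]
    have hsum_add : ∑ j ∈ s, ‖(u : ℕ → ℂ) j + ((t : ℝ) : ℂ) * (z : ℕ → ℂ) j‖ ^ q
        ≤ 1 + t ^ q := by
      rw [← Finset.sum_congr rfl fun j _ => by
        rw [show (u : ℕ → ℂ) j + ((t : ℝ) : ℂ) * (z : ℕ → ℂ) j
            = ((u + ((t : ℝ) : ℂ) • z : ellp p) : ℕ → ℂ) j by
          rw [lp.coeFn_add, Pi.add_apply, lp.coeFn_smul, Pi.smul_apply, smul_eq_mul]]]
      rw [← norm_rpow_eq_finsum hq0 hsupp_add]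
      exact hupp
    have hsum_sub : ∑ j ∈ s, ‖(u : ℕ → ℂ) j - ((t : ℝ) : ℂ) * (z : ℕ → ℂ) j‖ ^ q
        ≤ 1 + t ^ q := by
      rw [← Finset.sum_congr rfl fun j _ => by
        rw [show (u : ℕ → ℂ) j - ((t : ℝ) : ℂ) * (z : ℕ → ℂ) j
            = ((u - ((t : ℝ) : ℂ) • z : ellp p) : ℕ → ℂ) j by
          rw [lp.coeFn_sub, Pi.sub_apply, lp.coeFn_smul, Pi.smul_apply, smul_eq_mul]]]
      rw [← norm_rpow_eq_finsum hq0 hsupp_sub]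
      exact hupm
    -- coordinatewise lower bound
    have hcoordsum : ∀ j ∈ s, 2 * ‖(u : ℕ → ℂ) j‖ ^ q + K * (t ^ 2 * ‖(z : ℕ → ℂ) j‖ ^ 2)
        ≤ ‖(u : ℕ → ℂ) j + ((t : ℝ) : ℂ) * (z : ℕ → ℂ) j‖ ^ q
          + ‖(u : ℕ → ℂ) j - ((t : ℝ) : ℂ) * (z : ℕ → ℂ) j‖ ^ q := by
      intro j hj
      have hjM : j ≤ M := Nat.le_of_lt_succ (Finset.mem_range.1 hj)
      have := coord_key hq1 hm (hu_coord j hjM) (b := ((t : ℝ) : ℂ) * (z : ℕ → ℂ) j)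
      have hb2 : ‖((t : ℝ) : ℂ) * (z : ℕ → ℂ) j‖ ^ 2 = t ^ 2 * ‖(z : ℕ → ℂ) j‖ ^ 2 := by
        rw [norm_mul, Complex.norm_real, Real.norm_eq_abs, abs_of_pos ht, mul_pow]
      rw [hb2] at this
      rw [hKdef]
      linarith [this]
    have hsum_main : 2 * (∑ j ∈ s, ‖(u : ℕ → ℂ) j‖ ^ q)
        + K * t ^ 2 * (∑ j ∈ s, ‖(z : ℕ → ℂ) j‖ ^ 2) ≤ 2 + 2 * t ^ q := by
      have h1 := Finset.sum_le_sum hcoordsum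
      have e1 : ∑ j ∈ s, (2 * ‖(u : ℕ → ℂ) j‖ ^ q + K * (t ^ 2 * ‖(z : ℕ → ℂ) j‖ ^ 2))
          = 2 * (∑ j ∈ s, ‖(u : ℕ → ℂ) j‖ ^ q)
            + K * t ^ 2 * (∑ j ∈ s, ‖(z : ℕ → ℂ) j‖ ^ 2) := by
        rw [Finset.sum_add_distrib, Finset.mul_sum, Finset.mul_sum]
        congr 1
        exact Finset.sum_congr rfl fun j _ => by ring
      have e2 : ∑ j ∈ s, (‖(u : ℕ → ℂ) j + ((t : ℝ) : ℂ) * (z : ℕ → ℂ) j‖ ^ q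
            + ‖(u : ℕ → ℂ) j - ((t : ℝ) : ℂ) * (z : ℕ → ℂ) j‖ ^ q)
          = (∑ j ∈ s, ‖(u : ℕ → ℂ) j + ((t : ℝ) : ℂ) * (z : ℕ → ℂ) j‖ ^ q)
            + ∑ j ∈ s, ‖(u : ℕ → ℂ) j - ((t : ℝ) : ℂ) * (z : ℕ → ℂ) j‖ ^ q :=
        Finset.sum_add_distrib
      rw [e1, e2] at h1
      linarith [h1, hsum_add, hsum_sub]
    -- norm bounds
    have hu_sum : 1 - q * δ ≤ ∑ j ∈ s, ‖(u : ℕ → ℂ) j‖ ^ q := by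
      rw [← norm_rpow_eq_finsum hq0 hu_supp]
      have h1 : (1 - δ) ^ q ≤ ‖u‖ ^ q :=
        Real.rpow_le_rpow (by linarith) hu_norm hq0.le
      have h2 : 1 + q * (-δ) ≤ (1 + (-δ)) ^ q :=
        one_add_mul_self_le_rpow_one_add (by linarith) (by linarith)
      have e : (1 + (-δ) : ℝ) = 1 - δ := by ring
      rw [e] at h2
      linarith
    have hz_sum : ‖z‖ ^ 2 ≤ ∑ j ∈ s, ‖(z : ℕ → ℂ) j‖ ^ 2 :=
      norm_sq_le_sum_sq hq1 hq0 hz_supp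
    -- t^q = c₀ * t^2
    have htq : t ^ q = c₀ * t ^ 2 := by
      have e1 : t ^ q = t ^ (q - 2) * t ^ ((2:ℕ) : ℝ) := by
        rw [← Real.rpow_add ht]
        norm_num
      rw [e1, ht2, Real.rpow_natCast]
    -- conclude
    have hfinal : K * t ^ 2 * ‖z‖ ^ 2 ≤ 2 * q * δ + 2 * c₀ * t ^ 2 := by
      have h5 := hsum_main
      rw [htq] at h5
      have hm1 : K * t ^ 2 * ‖z‖ ^ 2 ≤ K * t ^ 2 * (∑ j ∈ s, ‖(z : ℕ → ℂ) j‖ ^ 2) :=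
        mul_le_mul_of_nonneg_left hz_sum (by positivity)
      linarith only [h5, hu_sum, hm1]
    have hc₀' : c₀ ≤ K * ε ^ 2 / 16 := hc₀def ▸ min_le_right _ _
    have hz2 : ‖z‖ ^ 2 ≤ ε ^ 2 / 4 := by
      have ht2pos : (0:ℝ) < t ^ 2 := by positivity
      have h1 : 2 * q * δ ≤ K * t ^ 2 * ε ^ 2 / 8 := by
        have h0 := hδlast
        rw [le_div_iff₀ (by positivity : (0:ℝ) < 16 * q)] at h0
        nlinarith only [h0, hq0]
      have h2 : 2 * c₀ * t ^ 2 ≤ K * t ^ 2 * ε ^ 2 / 8 := by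
        nlinarith only [mul_le_mul_of_nonneg_right hc₀' ht2pos.le]
      have h3 : K * t ^ 2 * ‖z‖ ^ 2 ≤ K * t ^ 2 * (ε ^ 2 / 4) := by
        calc K * t ^ 2 * ‖z‖ ^ 2 ≤ 2 * q * δ + 2 * c₀ * t ^ 2 := hfinal
          _ ≤ K * t ^ 2 * ε ^ 2 / 8 + K * t ^ 2 * ε ^ 2 / 8 := add_le_add h1 h2
          _ = K * t ^ 2 * (ε ^ 2 / 4) := by ring
      exact le_of_mul_le_mul_left (by linarith [h3]) (by positivity : (0:ℝ) < K * t ^ 2)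
    by_contra hcon
    push_neg at hcon
    have h4 : (ε/2) * (ε/2) < ‖z‖ * ‖z‖ :=
      mul_self_lt_mul_self (by positivity) hcon
    nlinarith only [h4, hz2]
  have hbound : ‖(projL p M).comp (T.comp (1 - projL p M))‖ ≤ ε / 2 := by
    refine ContinuousLinearMap.opNorm_le_bound _ (by positivity) ?_
    intro v
    have e : ((projL p M).comp (T.comp (1 - projL p M))) v = P (T (v - P v)) := by
      rw [ContinuousLinearMap.comp_apply, ContinuousLinearMap.comp_apply,
        ContinuousLinearMap.sub_apply, ContinuousLinearMap.one_apply, hPdef]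
    rw [e]
    set w' : ellp p := v - P v with hwdef
    have hw0 : P w' = 0 := by
      rw [hwdef, map_sub, hPdef, projL_proj, sub_self]
    have hwn : ‖w'‖ ≤ ‖v‖ := by
      rw [hwdef, hPdef]
      exact norm_sub_projL_le hq0 M v
    rcases eq_or_ne w' 0 with h0 | h0
    · rw [h0, map_zero, map_zero, norm_zero]
      positivity
    · have hnw : (0:ℝ) < ‖w'‖ := norm_pos_iff.2 h0
      set c : ℂ := ((‖w'‖ : ℝ) : ℂ)⁻¹ with hcdef
      have hcn : ‖c‖ = ‖w'‖⁻¹ := by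
        rw [hcdef, norm_inv, Complex.norm_real, Real.norm_eq_abs, abs_of_pos hnw]
      have hw1' : ‖c • w'‖ = 1 := by
        rw [norm_smul, hcn, inv_mul_cancel₀ hnw.ne']
      have hPw' : P (c • w') = 0 := by rw [map_smul, hw0, smul_zero]
      have hmain := main (c • w') hPw' hw1'.le
      have e3 : ((‖w'‖ : ℝ) : ℂ) • (c • w') = w' := by
        rw [smul_smul, hcdef, mul_inv_cancel₀, one_smul]
        exact_mod_cast hnw.ne'
      have e2 : P (T w') = ((‖w'‖ : ℝ) : ℂ) • P (T (c • w')) := by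
        rw [← map_smul, ← map_smul, e3]
      rw [e2, norm_smul, Complex.norm_real, Real.norm_eq_abs, abs_of_pos hnw]
      calc ‖w'‖ * ‖P (T (c • w'))‖ ≤ ‖w'‖ * (ε / 2) :=
            mul_le_mul_of_nonneg_left hmain hnw.le
        _ ≤ (ε / 2) * ‖v‖ := by nlinarith only [hwn, hε, hnw]
  exact lt_of_le_of_lt hbound (by linarith)

/-- Let `X = ℓ_p` with `2 < p < ∞`, and fix `M ≥ 0`. Suppose `B` is an operator living
on `E_M = span (e_0, …, e_M)` (i.e. `B = P_M B P_M`) with `‖B‖ = 1`, which is absolutely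
exposing (there is a norming vector `x₀ ∈ E_M`, and every norming vector in `E_M` is a
unimodular multiple of `x₀`) and evenly distributed (every norming vector `x ∈ E_M`
satisfies `e_j*(x) ≠ 0` and `e_j*(B x) ≠ 0` for all `j ≤ M`). Then for every `ε > 0`
there is `δ > 0` such that every contraction `T` with `‖P_M T P_M - B‖ < δ` satisfies
`‖P_M T (I - P_M)‖ < ε`. -/
theorem exposing_operator_forces_small_corner
    (p : ℝ≥0∞) [Fact (1 ≤ p)] (hp : 2 < p) (hp' : p ≠ ∞)
    (M : ℕ) (B : ellp p →L[ℂ] ellp p)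
    (hBnorm : ‖B‖ = 1)
    (hBlives : (projL p M).comp (B.comp (projL p M)) = B)
    (x₀ : ellp p) (hx₀E : projL p M x₀ = x₀) (hx₀norm : ‖x₀‖ = 1) (hx₀n : ‖B x₀‖ = ‖B‖)
    (habs : ∀ x : ellp p, projL p M x = x → ‖x‖ = 1 → ‖B x‖ = ‖B‖ →
      ∃ γ : ℂ, ‖γ‖ = 1 ∧ x = γ • x₀)
    (heven : ∀ x : ellp p, projL p M x = x → ‖x‖ = 1 → ‖B x‖ = ‖B‖ →
      ∀ j ≤ M, coordL p j x ≠ 0 ∧ coordL p j (B x) ≠ 0) :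
    ∀ ε : ℝ, 0 < ε → ∃ δ : ℝ, 0 < δ ∧
      ∀ T : ellp p →L[ℂ] ellp p, ‖T‖ ≤ 1 →
        ‖(projL p M).comp (T.comp (projL p M)) - B‖ < δ →
        ‖(projL p M).comp (T.comp (1 - projL p M))‖ < ε := by
  exact exposing_operator_forces_small_corner' hp hp' M B hBnorm x₀ hx₀E hx₀norm hx₀n heven
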